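/- arXiv:2204.09122 — 4 statements merged into one kernel-verified Lean document; each statement's English description precedes it below -/
import Mathlib

section
/- Let g : ℝ → ℝ be concave and non-negative on [0,1). Then the function y ↦ g({y}), where {y} = y - ⌊y⌋ is the fractional part, is subadditive on ℝ, provided g(0) ≥ 0 and g is extended periodically via the fractional part. -/
/-!
Write `a = {x}` and `b = {y}`. If `a + b < 1`, concavity together with `g 0 ≥ 0` makes `g`
star-shaped from `0`, so `g (a + b) ≤ g a + g b`. Otherwise `{x + y} = c := a + b - 1 ≤ min a b`,
and concavity together with `g ≥ 0` near `1` makes `t ↦ g t / (1 - t)` nondecreasing; since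
`(1 - a) + (1 - b) = 1 - c`, the bounds `(1 - a) g c ≤ (1 - c) g a` and `(1 - b) g c ≤ (1 - c) g b`
add up to the claim.
-/

open Set

theorem ConcaveOn.smul_le_map_of_nonneg {𝕜 E β : Type*} [Semiring 𝕜] [PartialOrder 𝕜]
    [AddCommMonoid E] [AddCommMonoid β] [PartialOrder β] [IsOrderedAddMonoid β]
    [SMul 𝕜 E] [Module 𝕜 β] [PosSMulMono 𝕜 β] {s : Set E} {f : E → β}
    (hf : ConcaveOn 𝕜 s f) {x y : E} (hx : x ∈ s) (hy : y ∈ s) (hfy : 0 ≤ f y)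
    {a b : 𝕜} (ha : 0 ≤ a) (hb : 0 ≤ b) (hab : a + b = 1) :
    a • f x ≤ f (a • x + b • y) :=
  (le_add_of_nonneg_right (smul_nonneg hb hfy)).trans (hf.2 hx hy ha hb hab)

theorem ConcaveOn.map_add_le {𝕜 β : Type*} [Field 𝕜] [LinearOrder 𝕜] [IsStrictOrderedRing 𝕜]
    [AddCommGroup β] [PartialOrder β] [IsOrderedAddMonoid β] [Module 𝕜 β] [PosSMulMono 𝕜 β]
    {s : Set 𝕜} {g : 𝕜 → β} (hg : ConcaveOn 𝕜 s g) (h0 : 0 ∈ s) (hg0 : 0 ≤ g 0)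
    {a b : 𝕜} (ha : 0 ≤ a) (hb : 0 ≤ b) (hab : a + b ∈ s) :
    g (a + b) ≤ g a + g b := by
  rcases (add_nonneg ha hb).eq_or_lt with hsum | hsum
  · obtain ⟨rfl, rfl⟩ : a = 0 ∧ b = 0 := ⟨by linarith, by linarith⟩
    simpa using hg0
  have hsplit (c : 𝕜) : c = (c / (a + b)) • (a + b) + (1 - c / (a + b)) • (0 : 𝕜) := by
    simp only [smul_eq_mul, mul_zero, add_zero]; field_simp
  have hle (c : 𝕜) (hc : 0 ≤ c) (hca : c ≤ a + b) : (c / (a + b)) • g (a + b) ≤ g c := by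
    conv_rhs => rw [hsplit c]
    exact hg.smul_le_map_of_nonneg hab h0 hg0 (by positivity)
      (sub_nonneg.2 ((div_le_one hsum).2 hca)) (add_sub_cancel _ _)
  calc g (a + b) = (a / (a + b)) • g (a + b) + (b / (a + b)) • g (a + b) := by
        rw [← add_smul, ← add_div, div_self hsum.ne', one_smul]
    _ ≤ g a + g b := add_le_add (hle a ha (by linarith)) (hle b hb (by linarith))

theorem ConcaveOn.sub_mul_le_sub_mul_of_Ico {p q : ℝ} {g : ℝ → ℝ}
    (hg : ConcaveOn ℝ (Ico p q) g) (hg_nonneg : ∀ x ∈ Ico p q, 0 ≤ g x)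
    {c a : ℝ} (hc : p ≤ c) (hca : c ≤ a) (ha : a < q) :
    (q - a) * g c ≤ (q - c) * g a := by
  have hinner : ∀ d ∈ Ioo a q, (d - a) * g c ≤ (d - c) * g a := by
    rintro d ⟨had, hdq⟩
    have hdc : 0 < d - c := by linarith
    have hd : d ∈ Ico p q := ⟨by linarith, hdq⟩
    have hsplit : ((d - a) / (d - c)) • c + ((a - c) / (d - c)) • d = a := by
      simp only [smul_eq_mul]; field_simp; ring
    have := hg.smul_le_map_of_nonneg ⟨hc, by linarith⟩ hd (hg_nonneg d hd)
      (a := (d - a) / (d - c)) (b := (a - c) / (d - c))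
      (div_nonneg (by linarith) hdc.le) (div_nonneg (by linarith) hdc.le) (by field_simp; ring)
    rw [hsplit, smul_eq_mul, div_mul_eq_mul_div, div_le_iff₀ hdc] at this
    linarith
  -- the bound at `d = q` follows by continuity, as `q` itself may lie outside the domain of concavity
  exact ContinuousWithinAt.closure_le (by rw [closure_Ioo ha.ne]; exact right_mem_Icc.2 ha.le)
    (by fun_prop) (by fun_prop) hinner

theorem Int.fract_add_eq_or {R : Type*} [CommRing R] [LinearOrder R] [IsStrictOrderedRing R]
    [FloorRing R] (a b : R) :
    fract (a + b) = fract a + fract b ∨ fract (a + b) = fract a + fract b - 1 := by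
  obtain ⟨z, hz⟩ := fract_add a b
  have hz_le : z ≤ 0 := by
    have := fract_add_le a b
    exact_mod_cast (show (z : R) ≤ 0 by linarith)
  have hz_ge : -1 ≤ z := by
    have := fract_add_fract_le a b
    exact_mod_cast (show (-1 : R) ≤ z by linarith)
  obtain rfl | rfl : z = 0 ∨ z = -1 := by omega
  · left; push_cast at hz; linarith
  · right; push_cast at hz; linarith

theorem ConcaveOn.map_add_sub_one_le {g : ℝ → ℝ} (hg : ConcaveOn ℝ (Ico 0 1) g)
    (hg_nonneg : ∀ x ∈ Ico (0 : ℝ) 1, 0 ≤ g x) {a b : ℝ} (ha : a < 1) (hb : b < 1)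
    (hab : 1 ≤ a + b) : g (a + b - 1) ≤ g a + g b := by
  have hca := hg.sub_mul_le_sub_mul_of_Ico (c := a + b - 1) hg_nonneg (by linarith) (by linarith) ha
  have hcb := hg.sub_mul_le_sub_mul_of_Ico (c := a + b - 1) hg_nonneg (by linarith) (by linarith) hb
  have hsum : (1 - (a + b - 1)) * g (a + b - 1) ≤ (1 - (a + b - 1)) * (g a + g b) := by
    linear_combination hca + hcb
  exact le_of_mul_le_mul_left hsum (by linarith)

theorem fract_comp_concave_subadditive (g : ℝ → ℝ)
    (hconc : ConcaveOn ℝ (Set.Ico (0:ℝ) 1) g)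
    (hnonneg : ∀ y ∈ Set.Ico (0:ℝ) 1, 0 ≤ g y) :
    ∀ x y : ℝ, g (Int.fract (x + y)) ≤ g (Int.fract x) + g (Int.fract y) := by
  intro x y
  have hfract : Int.fract (x + y) ∈ Ico (0 : ℝ) 1 := ⟨Int.fract_nonneg _, Int.fract_lt_one _⟩
  have h0 : (0 : ℝ) ∈ Ico (0 : ℝ) 1 := ⟨le_rfl, one_pos⟩
  rcases Int.fract_add_eq_or x y with h | h <;> rw [h] at hfract ⊢
  · exact hconc.map_add_le h0 (hnonneg 0 h0) (Int.fract_nonneg x) (Int.fract_nonneg y) hfract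
  · exact hconc.map_add_sub_one_le hnonneg (Int.fract_lt_one x) (Int.fract_lt_one y)
      (by linarith [hfract.1])
end

section
/- For fixed v ∈ (0,1), the function g_v : ℝ → ℝ defined by g_v(y) = min({y}/v, (1-{y})/(1-v)), where {y} denotes the fractional part of y, is subadditive on ℝ. -/
/-!
Write `φ_v(t) = min (t / v) ((1 - t) / (1 - v))` (`gmiBase v t`), so that `g_v(y) = φ_v({y})`.
For `a, b ≥ 0` with `a + b ≤ 1`, `φ_v(a + b) ≤ φ_v(a) + φ_v(b)`: bound the left side by
`(a + b) / v` against the sum of the two left branches, and by `(1 - a - b) / (1 - v)` against any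
sum that contains a right branch. If `{y₁} + {y₂} < 1` this applies directly to
`{y₁ + y₂} = {y₁} + {y₂}`. Otherwise `{y₁ + y₂} = {y₁} + {y₂} - 1`, and the symmetry
`φ_v(t) = φ_{1-v}(1 - t)` reduces to the first case for `1 - {y₁}` and `1 - {y₂}`.
-/

namespace Int

variable {R : Type*} [Ring R] [LinearOrder R] [FloorRing R] [IsOrderedRing R]

theorem fract_add_of_fract_add_fract_lt_one {a b : R} (h : fract a + fract b < 1) :
    fract (a + b) = fract a + fract b := by
  rw [fract_eq_iff]
  refine ⟨add_nonneg (fract_nonneg a) (fract_nonneg b), h, ⌊a⌋ + ⌊b⌋, ?_⟩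
  push_cast [fract]
  abel

theorem fract_add_of_one_le_fract_add_fract {a b : R} (h : 1 ≤ fract a + fract b) :
    fract (a + b) = fract a + fract b - 1 := by
  rw [fract_eq_iff]
  refine ⟨sub_nonneg.2 h, ?_, ⌊a⌋ + ⌊b⌋ + 1, ?_⟩
  · rw [sub_lt_iff_lt_add]
    exact add_lt_add (fract_lt_one a) (fract_lt_one b)
  · push_cast [fract]
    abel

end Int

noncomputable def gmiBase (v t : ℝ) : ℝ :=
  min (t / v) ((1 - t) / (1 - v))

theorem gmiBase_one_sub (v t : ℝ) : gmiBase (1 - v) (1 - t) = gmiBase v t := by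
  simp only [gmiBase, sub_sub_cancel, min_comm]

theorem gmiBase_add_le {v a b : ℝ} (hv : v ∈ Set.Icc (0 : ℝ) 1) (ha : 0 ≤ a) (hb : 0 ≤ b)
    (hab : a + b ≤ 1) : gmiBase v (a + b) ≤ gmiBase v a + gmiBase v b := by
  obtain ⟨hv0, hv1⟩ := hv
  have hv1' : 0 ≤ 1 - v := sub_nonneg.2 hv1
  have left_le : gmiBase v (a + b) ≤ a / v + b / v := (min_le_left _ _).trans_eq (add_div a b v)
  have right_le_a : gmiBase v (a + b) ≤ (1 - a) / (1 - v) :=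
    (min_le_right _ _).trans (by gcongr; linarith)
  have right_le_b : gmiBase v (a + b) ≤ (1 - b) / (1 - v) :=
    (min_le_right _ _).trans (by gcongr; linarith)
  have ha' : 0 ≤ a / v := div_nonneg ha hv0
  have hb' : 0 ≤ b / v := div_nonneg hb hv0
  have ha'' : 0 ≤ (1 - a) / (1 - v) := div_nonneg (by linarith) hv1'
  have hb'' : 0 ≤ (1 - b) / (1 - v) := div_nonneg (by linarith) hv1'
  unfold gmiBase at ⊢ left_le right_le_a right_le_b
  rcases min_cases (a / v) ((1 - a) / (1 - v)) with ⟨ea, -⟩ | ⟨ea, -⟩ <;>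
    rcases min_cases (b / v) ((1 - b) / (1 - v)) with ⟨eb, -⟩ | ⟨eb, -⟩ <;>
    rw [ea, eb] <;> linarith

theorem gmiBase_fract_add_le {v : ℝ} (hv : v ∈ Set.Icc (0 : ℝ) 1) (y₁ y₂ : ℝ) :
    gmiBase v (Int.fract (y₁ + y₂)) ≤ gmiBase v (Int.fract y₁) + gmiBase v (Int.fract y₂) := by
  have h₁ := Int.fract_lt_one y₁
  have h₂ := Int.fract_lt_one y₂
  rcases lt_or_ge (Int.fract y₁ + Int.fract y₂) 1 with h | h
  · rw [Int.fract_add_of_fract_add_fract_lt_one h]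
    exact gmiBase_add_le hv (Int.fract_nonneg y₁) (Int.fract_nonneg y₂) h.le
  · have hv' : 1 - v ∈ Set.Icc (0 : ℝ) 1 := ⟨by linarith [hv.2], by linarith [hv.1]⟩
    rw [Int.fract_add_of_one_le_fract_add_fract h, ← gmiBase_one_sub v, ← gmiBase_one_sub v,
      ← gmiBase_one_sub v (Int.fract y₂),
      show 1 - (Int.fract y₁ + Int.fract y₂ - 1) = (1 - Int.fract y₁) + (1 - Int.fract y₂) by ring]
    exact gmiBase_add_le hv' (by linarith) (by linarith) (by linarith)

theorem gmi_base_subadditive (v : ℝ) (hv : v ∈ Set.Ioo (0:ℝ) 1) :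
    ∀ y₁ y₂ : ℝ,
      min (Int.fract (y₁ + y₂) / v) ((1 - Int.fract (y₁ + y₂)) / (1 - v)) ≤
        min (Int.fract y₁ / v) ((1 - Int.fract y₁) / (1 - v)) +
        min (Int.fract y₂ / v) ((1 - Int.fract y₂) / (1 - v)) :=
  gmiBase_fract_add_le (Set.Ioo_subset_Icc_self hv)
end

section
/- The generalized Gomory mixed-integer function φ_{w,v}(y) = min({wy}/{v}, (1-{wy})/(1-{v})) + max(-w/{v}, w/(1-{v}))·y (for scalar y, w ∈ ℝ, {v} ∈ (0,1)) satisfies φ_{w,v}(0) = 0 and φ_{w,v}(y₁) ≤ φ_{w,v}(y₂) whenever y₁ ≤ y₂. -/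
/-!
With `f = {v}` and `g(t) = min({t}/f, (1-{t})/(1-f))` we have `φ_{w,v}(y) = g(wy) + c y`,
`c = max(-w/f, w/(1-f))`. The sawtooth `g` is continuous (as `t ↑ n ∈ ℤ` the second branch
tends to `0 = g(n)`) with slopes `1/f` and `-1/(1-f)`, so `g(t) + t/(1-f)` is nondecreasing; by the symmetry
`g_{1-f}(-t) = g_f(t)` also `g(t) - t/f` is nonincreasing. For `w ≥ 0` the maximum is `w/(1-f)`
and `φ(y) = g(wy) + wy/(1-f)`; for `w ≤ 0` it is `-w/f` and `φ(y) = g(wy) - wy/f` with `wy`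
nonincreasing in `y`.
-/

noncomputable def gmi (f t : ℝ) : ℝ :=
  min (Int.fract t / f) ((1 - Int.fract t) / (1 - f))

theorem gmi_zero {f : ℝ} (hf : f ≤ 1) : gmi f 0 = 0 := by
  simp only [gmi, Int.fract_zero, zero_div, sub_zero]
  exact min_eq_left (one_div_nonneg.2 (sub_nonneg.2 hf))

theorem gmi_one_sub_neg {f : ℝ} (hf0 : 0 ≤ f) (hf1 : f ≤ 1) (t : ℝ) :
    gmi (1 - f) (-t) = gmi f t := by
  by_cases ht : Int.fract t = 0
  · have hf1' : 0 ≤ 1 - f := sub_nonneg.2 hf1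
    simp only [gmi, Int.fract_neg_eq_zero.2 ht, ht, zero_div, sub_zero, sub_sub_cancel]
    rw [min_eq_left (div_nonneg zero_le_one hf0), min_eq_left (div_nonneg zero_le_one hf1')]
  · rw [gmi, gmi, Int.fract_neg ht, sub_sub_cancel, sub_sub_cancel, min_comm]

theorem gmi_add_div_eq_min (f t : ℝ) :
    gmi f t + t / (1 - f) = min (Int.fract t / f + t / (1 - f)) ((⌊t⌋ + 1) / (1 - f)) := by
  rw [gmi, ← min_add_add_right, ← add_div, ← Int.self_sub_fract t]
  ring_nf

theorem monotone_gmi_add_div {f : ℝ} (hf0 : 0 ≤ f) (hf1 : f ≤ 1) :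
    Monotone fun t => gmi f t + t / (1 - f) := by
  intro t₁ t₂ h
  have hf1' : 0 ≤ 1 - f := sub_nonneg.2 hf1
  simp only [gmi_add_div_eq_min]
  rcases (Int.floor_mono h).eq_or_lt with hfloor | hfloor
  · have hfract : Int.fract t₁ ≤ Int.fract t₂ := by
      unfold Int.fract
      rw [hfloor]
      linarith
    rw [hfloor]
    gcongr
  · have hstep : ((⌊t₁⌋ : ℝ) + 1) / (1 - f) ≤ ⌊t₂⌋ / (1 - f) := by
      gcongr
      exact_mod_cast hfloor
    have hfloor_le : (⌊t₂⌋ : ℝ) / (1 - f) ≤ Int.fract t₂ / f + t₂ / (1 - f) :=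
      calc (⌊t₂⌋ : ℝ) / (1 - f) ≤ t₂ / (1 - f) := by gcongr; exact Int.floor_le t₂
        _ ≤ Int.fract t₂ / f + t₂ / (1 - f) :=
          le_add_of_nonneg_left (div_nonneg (Int.fract_nonneg t₂) hf0)
    refine (min_le_right _ _).trans (le_min (hstep.trans hfloor_le) (hstep.trans ?_))
    gcongr
    linarith

theorem antitone_gmi_sub_div {f : ℝ} (hf0 : 0 ≤ f) (hf1 : f ≤ 1) :
    Antitone fun t => gmi f t - t / f := by
  intro t₁ t₂ h
  have key := monotone_gmi_add_div (f := 1 - f) (by linarith) (by linarith) (neg_le_neg h)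
  simp only [gmi_one_sub_neg hf0 hf1, sub_sub_cancel, neg_div] at key
  simpa only [← sub_eq_add_neg] using key

theorem gmi_one_dim_monotone (w v : ℝ) (hv : Int.fract v ∈ Set.Ioo (0:ℝ) 1) :
    (min (Int.fract (w * 0) / Int.fract v)
        ((1 - Int.fract (w * 0)) / (1 - Int.fract v)) +
      max (-w / Int.fract v) (w / (1 - Int.fract v)) * 0) = 0 ∧
    (∀ y₁ y₂ : ℝ, y₁ ≤ y₂ →
      (min (Int.fract (w * y₁) / Int.fract v)
          ((1 - Int.fract (w * y₁)) / (1 - Int.fract v)) +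
        max (-w / Int.fract v) (w / (1 - Int.fract v)) * y₁) ≤
      (min (Int.fract (w * y₂) / Int.fract v)
          ((1 - Int.fract (w * y₂)) / (1 - Int.fract v)) +
        max (-w / Int.fract v) (w / (1 - Int.fract v)) * y₂)) := by
  set f := Int.fract v
  obtain ⟨hf0, hf1⟩ := hv
  change gmi f (w * 0) + _ = 0 ∧ ∀ y₁ y₂ : ℝ, y₁ ≤ y₂ →
    gmi f (w * y₁) + _ * y₁ ≤ gmi f (w * y₂) + _ * y₂
  refine ⟨by simp [gmi_zero hf1.le], fun y₁ y₂ hy => ?_⟩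
  have hf1' : 0 ≤ 1 - f := by linarith
  rcases le_total 0 w with hw | hw
  · rw [max_eq_right <|
      (div_nonpos_of_nonpos_of_nonneg (neg_nonpos.2 hw) hf0.le).trans (div_nonneg hw hf1')]
    have := monotone_gmi_add_div hf0.le hf1.le (mul_le_mul_of_nonneg_left hy hw)
    simpa only [div_mul_eq_mul_div] using this
  · rw [max_eq_left <|
      (div_nonpos_of_nonpos_of_nonneg hw hf1').trans (div_nonneg (neg_nonneg.2 hw) hf0.le)]
    have := antitone_gmi_sub_div hf0.le hf1.le (mul_le_mul_of_nonpos_left hy hw)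
    simpa only [div_mul_eq_mul_div, neg_mul, neg_div, ← sub_eq_add_neg] using this
end

section
/- Let φ : ℝ^m → ℝ be subadditive, non-decreasing with φ(0)=0, and let φ̄ : ℝ^m → ℝ be sublinear (positively homogeneous and subadditive) with φ ≤ φ̄ pointwise. If A ∈ ℝ^{m×k}, G ∈ ℝ^{m×(n-k)}, b ∈ ℝ^m, and (x,z) with x ∈ ℤ^k ∩ ℝ₊^k, z ∈ ℝ₊^{n-k} satisfies Ax + Gz ≥ b, then φ applied columnwise gives φ(A)x + φ̄(G)z ≥ φ(b), where φ(A) denotes the row vector (φ(A₁),...,φ(A_k)) of values on the columns of A. -/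
/-! Monotonicity moves `φ` from `b` to `Ax + Gz`, and subadditivity splits it over the columns.
On an integer column `x_j A_j = A_j + ⋯ + A_j`, so subadditivity alone bounds its value by
`x_j φ(A_j)`; on a continuous column one first passes to the sublinear majorant `φ̄`, whose
positive homogeneity handles arbitrary `z_j ≥ 0`. -/

open Finset Matrix

section Subadditive

variable {M ι : Type*} [AddCommMonoid M] {f : M → ℝ}

theorem apply_nsmul_le_of_subadditive (h0 : f 0 ≤ 0) (hf : ∀ a b, f (a + b) ≤ f a + f b)
    (n : ℕ) (a : M) : f (n • a) ≤ f a * n := by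
  simpa [mul_comm] using le_sum_of_subadditive f h0 hf (range n) fun _ => a

theorem apply_sum_nsmul_le_of_subadditive (h0 : f 0 ≤ 0) (hf : ∀ a b, f (a + b) ≤ f a + f b)
    (s : Finset ι) (c : ι → ℕ) (v : ι → M) :
    f (∑ j ∈ s, c j • v j) ≤ ∑ j ∈ s, f (v j) * c j :=
  (le_sum_of_subadditive f h0 hf s _).trans <|
    sum_le_sum fun j _ => apply_nsmul_le_of_subadditive h0 hf (c j) (v j)

theorem apply_sum_smul_le_of_sublinear [Module ℝ M]
    (hhom : ∀ l : ℝ, 0 ≤ l → ∀ a, f (l • a) = l * f a) (hf : ∀ a b, f (a + b) ≤ f a + f b)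
    (s : Finset ι) (c : ι → ℝ) (hc : ∀ j ∈ s, 0 ≤ c j) (v : ι → M) :
    f (∑ j ∈ s, c j • v j) ≤ ∑ j ∈ s, f (v j) * c j := by
  have h0 : f 0 = 0 := by simpa using hhom 0 le_rfl 0
  refine (le_sum_of_subadditive f h0.le hf s _).trans_eq (sum_congr rfl fun j hj => ?_)
  rw [hhom (c j) (hc j hj), mul_comm]

end Subadditive

theorem Matrix.mulVec_eq_sum_smul_col {m k R : Type*} [Fintype k] [CommSemiring R]
    (A : Matrix m k R) (x : k → R) : A *ᵥ x = ∑ j, x j • fun i => A i j := by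
  ext i
  simp [Matrix.mulVec, dotProduct, mul_comm]

theorem exists_natCast_eq_of_intCast_eq {r : ℝ} (hr : 0 ≤ r) (h : ∃ q : ℤ, r = q) :
    ∃ c : ℕ, r = c := by
  obtain ⟨q, rfl⟩ := h
  exact ⟨q.toNat, by exact_mod_cast (Int.toNat_of_nonneg (by exact_mod_cast hr)).symm⟩

theorem subadditive_valid_inequality {m k n : ℕ}
    (φ : (Fin m → ℝ) → ℝ) (φbar : (Fin m → ℝ) → ℝ)
    (hsub : ∀ y₁ y₂, φ (y₁ + y₂) ≤ φ y₁ + φ y₂)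
    (hmono : Monotone φ) (h0 : φ 0 = 0)
    (hbar_hom : ∀ (l : ℝ), 0 ≤ l → ∀ y, φbar (l • y) = l * φbar y)
    (hbar_sub : ∀ y₁ y₂, φbar (y₁ + y₂) ≤ φbar y₁ + φbar y₂)
    (hle : ∀ y, φ y ≤ φbar y)
    (A : Matrix (Fin m) (Fin k) ℝ) (G : Matrix (Fin m) (Fin (n - k)) ℝ)
    (b : Fin m → ℝ) (x : Fin k → ℝ) (z : Fin (n - k) → ℝ)
    (hx_int : ∀ j, ∃ q : ℤ, x j = q)
    (hx_nonneg : 0 ≤ x) (hz_nonneg : 0 ≤ z)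
    (hfeas : A.mulVec x + G.mulVec z ≥ b) :
    (∑ j, φ (fun i => A i j) * x j) + (∑ j, φbar (fun i => G i j) * z j) ≥ φ b := by
  choose c hc using fun j => exists_natCast_eq_of_intCast_eq (hx_nonneg j) (hx_int j)
  have hAx : φ (A *ᵥ x) ≤ ∑ j, φ (fun i => A i j) * x j := by
    simp_rw [A.mulVec_eq_sum_smul_col, hc, Nat.cast_smul_eq_nsmul]
    exact apply_sum_nsmul_le_of_subadditive h0.le hsub _ c _
  have hGz : φbar (G *ᵥ z) ≤ ∑ j, φbar (fun i => G i j) * z j := by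
    rw [G.mulVec_eq_sum_smul_col]
    exact apply_sum_smul_le_of_sublinear hbar_hom hbar_sub _ z (fun j _ => hz_nonneg j) _
  calc φ b ≤ φ (A *ᵥ x + G *ᵥ z) := hmono hfeas
    _ ≤ φ (A *ᵥ x) + φ (G *ᵥ z) := hsub _ _
    _ ≤ _ := add_le_add hAx ((hle _).trans hGz)
end
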